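/- Let G, Ω, v, d, H and N be as in the standing hypotheses. Then the point stabilizer G_v has an orbit on Ω of length d if and only if N > H (i.e. the normaliser of H in G strictly contains H). -/

import Mathlib

/-!
Write `K = G_v`. If `x ∈ N_G(H) \ H`, then `x ∉ K` because `H` is self-normalising in `K`, and
`H` fixes `x • v ≠ v`. In a faithful primitive non-regular action no point stabilizer fixes a
second point (otherwise it would be normal, hence trivial), so by maximality of `H` in `K` the
stabilizer of `x • v` in `K` is exactly `H`, and that `K`-orbit has length `d`.

Conversely, if a `K`-orbit has length `d`, its point stabilizers in `K` have index `d`, so one of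
them is `H`: `H ≤ G_w` for some `w ≠ v`. Writing `w = g • v`, the conjugate `g⁻¹ H g` is a subgroup
of `K` of index `d`, hence equals `a⁻¹ H a` for some `a ∈ K`; then `a g⁻¹` normalises `H` but
does not fix `v`.
-/

namespace Subgroup

variable {G : Type*} [Group G]

theorem map_conj_eq_of_map_conj_subgroupOf_eq {K A B : Subgroup G} (hA : A ≤ K) (hB : B ≤ K)
    (a : K) (h : (A.subgroupOf K).map (MulAut.conj a).toMonoidHom = B.subgroupOf K) :
    A.map (MulAut.conj (a : G)).toMonoidHom = B := by
  have hcomm : K.subtype.comp (MulAut.conj a).toMonoidHom =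
      (MulAut.conj (a : G)).toMonoidHom.comp K.subtype := by
    ext x
    simp
  have h' := congrArg (map K.subtype) h
  rwa [map_map, hcomm, ← map_map, subgroupOf_map_subtype, subgroupOf_map_subtype,
    inf_of_le_left hA, inf_of_le_left hB] at h'

theorem relIndex_map_conj {H K : Subgroup G} (hK : K.index ≠ 0) (g : G) (hH : H ≤ K)
    (hgH : H.map (MulAut.conj g).toMonoidHom ≤ K) :
    (H.map (MulAut.conj g).toMonoidHom).relIndex K = H.relIndex K := by
  refine Nat.eq_of_mul_eq_mul_right (Nat.pos_of_ne_zero hK) ?_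
  rw [relIndex_mul_index hgH, relIndex_mul_index hH]
  exact index_map_equiv H (MulAut.conj g)

theorem map_conj_mul (a b : G) (H : Subgroup G) :
    H.map (MulAut.conj (a * b)).toMonoidHom =
      (H.map (MulAut.conj b).toMonoidHom).map (MulAut.conj a).toMonoidHom := by
  rw [map_map, map_mul]
  rfl

end Subgroup

namespace MulAction

variable {G Ω : Type*} [Group G] [MulAction G Ω]

theorem stabilizer_eq_bot_of_eq_bot [IsPretransitive G Ω] {v : Ω} (hv : stabilizer G v = ⊥)
    (w : Ω) : stabilizer G w = ⊥ := by
  obtain ⟨g, rfl⟩ := exists_smul_eq G v w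
  rw [stabilizer_smul_eq_stabilizer_map_conj, hv, Subgroup.map_bot]

theorem stabilizer_eq_bot_of_normal [FaithfulSMul G Ω] [IsPretransitive G Ω] {v : Ω}
    (hv : (stabilizer G v).Normal) : stabilizer G v = ⊥ := by
  refine (Subgroup.eq_bot_iff_forall _).mpr fun k hk => eq_of_smul_eq_smul (α := Ω) fun u => ?_
  obtain ⟨g, rfl⟩ := exists_smul_eq G v u
  have hgk : g⁻¹ * k * g ∈ stabilizer G v := by simpa using hv.conj_mem k hk g⁻¹
  rw [one_smul, ← inv_smul_eq_iff, ← mul_smul, ← mul_smul]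
  exact hgk

theorem le_stabilizer_smul_of_mem_normalizer {H : Subgroup G} {v : Ω} (hH : H ≤ stabilizer G v)
    {x : G} (hx : x ∈ Subgroup.normalizer (H : Set G)) : H ≤ stabilizer G (x • v) := by
  rw [stabilizer_smul_eq_stabilizer_map_conj, ← Subgroup.mem_normalizer_iff_map_conj_eq.mp hx]
  exact Subgroup.map_mono hH

theorem eq_of_stabilizer_le [FaithfulSMul G Ω] [IsPretransitive G Ω]
    (hnonreg : ∃ ω : Ω, stabilizer G ω ≠ ⊥) {v w : Ω} (hv : IsCoatom (stabilizer G v))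
    (hw : IsCoatom (stabilizer G w)) (hle : stabilizer G v ≤ stabilizer G w) : w = v := by
  by_contra hne
  obtain ⟨ω, hω⟩ := hnonreg
  have heq : stabilizer G w = stabilizer G v := (hv.le_iff.mp hle).resolve_left hw.1
  obtain ⟨g, rfl⟩ := exists_smul_eq G v w
  have hgN : g ∈ Subgroup.normalizer (stabilizer G v : Set G) := by
    rw [Subgroup.mem_normalizer_iff_map_conj_eq]
    exact (stabilizer_smul_eq_stabilizer_map_conj g v).symm.trans heq
  have hnormal : (stabilizer G v).Normal := by
    rw [← Subgroup.normalizer_eq_top_iff]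
    have hg : g ∉ stabilizer G v := hne
    exact hv.2 _ (lt_of_le_of_ne Subgroup.le_normalizer fun h => hg (h ▸ hgN))
  exact hω (stabilizer_eq_bot_of_eq_bot (stabilizer_eq_bot_of_normal hnormal) ω)

theorem lt_normalizer_of_le_stabilizer [IsPretransitive G Ω] {H : Subgroup G} {v w : Ω}
    (hvw : w ≠ v) (hv : H ≤ stabilizer G v) (hw : H ≤ stabilizer G w)
    (hindex : (stabilizer G v).index ≠ 0)
    (hconj : ∀ L ≤ stabilizer G v, L.relIndex (stabilizer G v) = H.relIndex (stabilizer G v) →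
      ∃ a ∈ stabilizer G v, L.map (MulAut.conj a).toMonoidHom = H) :
    H < Subgroup.normalizer (H : Set G) := by
  obtain ⟨g, rfl⟩ := exists_smul_eq G v w
  have hg : g ∉ stabilizer G v := hvw
  have hL : H.map (MulAut.conj g⁻¹).toMonoidHom ≤ stabilizer G v := by
    have := Subgroup.map_mono (f := (MulAut.conj g⁻¹).toMonoidHom) hw
    rwa [← stabilizer_smul_eq_stabilizer_map_conj, inv_smul_smul] at this
  obtain ⟨a, ha, haH⟩ := hconj _ hL (Subgroup.relIndex_map_conj hindex g⁻¹ hv hL)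
  rw [SetLike.lt_iff_le_and_exists]
  refine ⟨Subgroup.le_normalizer, a * g⁻¹, ?_, fun h => hg ?_⟩
  · rw [Subgroup.mem_normalizer_iff_map_conj_eq]
    exact (Subgroup.map_conj_mul a g⁻¹ H).trans haH
  · have hginv : g⁻¹ ∈ stabilizer G v := by
      simpa using (stabilizer G v).mul_mem ((stabilizer G v).inv_mem ha) (hv h)
    simpa using (stabilizer G v).inv_mem hginv

theorem orbit_ncard_smul_eq_relIndex [FaithfulSMul G Ω] [IsPretransitive G Ω]
    (hnonreg : ∃ ω : Ω, stabilizer G ω ≠ ⊥) (hprim : ∀ ω : Ω, IsCoatom (stabilizer G ω))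
    {H : Subgroup G} {v : Ω} (hv : H ≤ stabilizer G v)
    (hmax : IsCoatom (H.subgroupOf (stabilizer G v)))
    (hself : Subgroup.normalizer (H.subgroupOf (stabilizer G v) : Set (stabilizer G v)) =
      H.subgroupOf (stabilizer G v))
    {x : G} (hxN : x ∈ Subgroup.normalizer (H : Set G)) (hxH : x ∉ H) :
    (orbit (stabilizer G v) (x • v)).ncard = H.relIndex (stabilizer G v) := by
  set K := stabilizer G v
  have hxK : x ∉ K := fun hxK => hxH <| by
    have : (⟨x, hxK⟩ : K) ∈ Subgroup.normalizer (H.subgroupOf K : Set K) :=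
      Subgroup.le_normalizer_comap K.subtype hxN
    rwa [hself] at this
  have hle : H.subgroupOf K ≤ stabilizer K (x • v) := fun y hy =>
    le_stabilizer_smul_of_mem_normalizer hv hxN hy
  have heq : stabilizer K (x • v) = H.subgroupOf K := by
    refine (hmax.le_iff.mp hle).resolve_left fun htop => hxK ?_
    exact eq_of_stabilizer_le hnonreg (hprim v) (hprim _) (Subgroup.subgroupOf_eq_top.mp htop)
  rw [← index_stabilizer, heq]
  rfl

end MulAction

open MulAction

theorem stmt_4 (G Ω : Type*) [Group G] [MulAction G Ω] [Finite Ω] [FaithfulSMul G Ω]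
    -- G acts primitively (transitively with maximal point stabilizers) ...
    (htrans : MulAction.IsPretransitive G Ω)
    (hprim : ∀ ω : Ω, IsCoatom (MulAction.stabilizer G ω))
    -- ... and non-regularly
    (hnonreg : ∃ ω : Ω, MulAction.stabilizer G ω ≠ ⊥)
    (v : Ω) (d : ℕ) (hd : 2 ≤ d)
    -- G_v has a unique conjugacy class of subgroups of index d ...
    (hconj : ∀ K L : Subgroup (MulAction.stabilizer G v), K.index = d → L.index = d →
      ∃ g : (MulAction.stabilizer G v), Subgroup.map (MulAut.conj g).toMonoidHom K = L)
    -- ... and these subgroups are maximal and self-normalising in G_v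
    (hmax : ∀ K : Subgroup (MulAction.stabilizer G v), K.index = d → IsCoatom K)
    (hself : ∀ K : Subgroup (MulAction.stabilizer G v), K.index = d → Subgroup.normalizer (K : Set (MulAction.stabilizer G v)) = K)
    -- H is such a subgroup of index d in G_v
    (H : Subgroup G) (hHle : H ≤ MulAction.stabilizer G v)
    (hHidx : (H.subgroupOf (MulAction.stabilizer G v)).index = d) :
    -- G_v has an orbit of length d iff N_G(H) strictly contains H
    (∃ w : Ω, (MulAction.orbit (MulAction.stabilizer G v) w).ncard = d) ↔
      H < Subgroup.normalizer (H : Set G) := by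
  have := htrans
  set K := stabilizer G v
  have hindex : K.index ≠ 0 := by
    rw [index_stabilizer]
    exact ((Set.ncard_pos).mpr ⟨v, mem_orbit_self v⟩).ne'
  constructor
  · rintro ⟨w, hw⟩
    obtain ⟨a, ha⟩ := hconj (stabilizer K w) (H.subgroupOf K) (by rw [index_stabilizer, hw]) hHidx
    have hstab : stabilizer K (a • w) = H.subgroupOf K := by
      rw [stabilizer_smul_eq_stabilizer_map_conj, ha]
    refine lt_normalizer_of_le_stabilizer (w := (a : G) • w) (fun hv => ?_) hHle
      (fun h hh => show (⟨h, hHle hh⟩ : K) ∈ stabilizer K (a • w) from hstab ▸ hh) hindex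
      (fun L hL hLidx => ?_)
    · have htop : H.subgroupOf K = ⊤ := by
        rw [← hstab, show a • w = v from hv]
        exact Subgroup.subgroupOf_eq_top.mpr le_rfl
      rw [htop, Subgroup.index_top] at hHidx
      omega
    · obtain ⟨b, hb⟩ := hconj (L.subgroupOf K) (H.subgroupOf K) (hLidx.trans hHidx) hHidx
      exact ⟨b, b.2, Subgroup.map_conj_eq_of_map_conj_subgroupOf_eq hL hHle b hb⟩
  · intro hlt
    obtain ⟨x, hxN, hxH⟩ := SetLike.exists_of_lt hlt
    exact ⟨x • v, (orbit_ncard_smul_eq_relIndex hnonreg hprim hHle (hmax _ hHidx)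
      (hself _ hHidx) hxN hxH).trans hHidx⟩
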